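/- For every positive natural number ℓ, the ℓ functions x ↦ N_ℓ(x + k) for k = 0, 1, …, ℓ − 1, regarded as functions on the interval [0,1], are linearly independent over ℝ: if c₀, …, c_{ℓ−1} ∈ ℝ satisfy Σ_{k=0}^{ℓ−1} c_k · N_ℓ(x + k) = 0 for all x ∈ [0,1], then c₀ = ⋯ = c_{ℓ−1} = 0. -/

import Mathlib

/-!
Induction on `ℓ`. Writing `N_{ℓ+1}(x) = F(x) - F(x - 1)` with `F` a primitive of `N_ℓ` and
differentiating `∑ c_k N_{ℓ+1}(x + k) = 0` on `(0, 1)` gives, after summation by parts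
(`N_ℓ` vanishes at `x - 1` and at `x + ℓ`), `∑ (c_k - c_{k+1}) N_ℓ(x + k) = 0`. By induction all
`c_k` are then equal, and their common value is `0` because `∑_k N_{ℓ+1}(1/2 + k) > 0`, as
`N_{ℓ+1}(x) = x^ℓ / ℓ!` on `[0, 1]`.
-/

open MeasureTheory

/-- The B-spline of order `ℓ`: `N₁` is the indicator of `[0,1]` and
`N_{ℓ+1}(x) = ∫₀¹ N_ℓ(x - t) dt`. The value for `ℓ = 0` is irrelevant. -/
noncomputable def bspline : ℕ → ℝ → ℝ
  | 0, _ => 0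
  | 1, x => if x ∈ Set.Icc (0 : ℝ) 1 then 1 else 0
  | (n + 2), x => ∫ t in (0 : ℝ)..1, bspline (n + 1) (x - t)

open Set intervalIntegral

theorem intervalIntegral_comp_sub_eq_sub_primitive {f : ℝ → ℝ}
    (hf : ∀ a b, IntervalIntegrable f volume a b) (x : ℝ) :
    ∫ t in (0 : ℝ)..1, f (x - t) = (∫ u in (0 : ℝ)..x, f u) - ∫ u in (0 : ℝ)..x - 1, f u := by
  rw [integral_comp_sub_left f x, sub_zero, integral_interval_sub_left (hf 0 x) (hf 0 (x - 1))]

theorem continuous_intervalIntegral_comp_sub {f : ℝ → ℝ}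
    (hf : ∀ a b, IntervalIntegrable f volume a b) :
    Continuous fun x => ∫ t in (0 : ℝ)..1, f (x - t) := by
  have hF := continuous_primitive hf 0
  simp only [intervalIntegral_comp_sub_eq_sub_primitive hf]
  exact hF.sub (hF.comp (continuous_sub_right 1))

theorem bspline_one : bspline 1 = (Icc (0 : ℝ) 1).indicator 1 := by
  ext x
  simp [bspline, indicator_apply]

theorem bspline_succ_succ (n : ℕ) (x : ℝ) :
    bspline (n + 2) x = ∫ t in (0 : ℝ)..1, bspline (n + 1) (x - t) := rfl

theorem bspline_nonneg : ∀ (n : ℕ) (x : ℝ), 0 ≤ bspline n x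
  | 0, _ => le_rfl
  | 1, x => by rw [bspline_one]; exact indicator_nonneg (fun _ _ => zero_le_one (α := ℝ)) x
  | n + 2, x => integral_nonneg zero_le_one fun t _ => bspline_nonneg (n + 1) (x - t)

theorem bspline_le_one : ∀ (n : ℕ) (x : ℝ), bspline n x ≤ 1
  | 0, _ => zero_le_one
  | 1, x => by rw [bspline_one]; exact indicator_le_self' (fun _ _ => zero_le_one (α := ℝ)) x
  | n + 2, x =>
    calc bspline (n + 2) x ≤ ‖bspline (n + 2) x‖ := Real.le_norm_self _
      _ ≤ 1 * |1 - 0| := norm_integral_le_of_norm_le_const fun t _ => by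
        rw [Real.norm_of_nonneg (bspline_nonneg _ _)]
        exact bspline_le_one (n + 1) (x - t)
      _ = 1 := by norm_num

theorem bspline_intervalIntegrable_of_measurable {n : ℕ} (hn : Measurable (bspline n))
    (a b : ℝ) : IntervalIntegrable (bspline n) volume a b :=
  intervalIntegrable_const.mono_fun' hn.aestronglyMeasurable <| ae_of_all _ fun x => by
    simpa [Real.norm_of_nonneg (bspline_nonneg n x)] using bspline_le_one n x

theorem bspline_measurable : ∀ n : ℕ, Measurable (bspline n)
  | 0 => measurable_const
  | 1 => bspline_one ▸ measurable_one.indicator measurableSet_Icc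
  | n + 2 => (continuous_intervalIntegral_comp_sub
      (bspline_intervalIntegrable_of_measurable (bspline_measurable (n + 1)))).measurable

theorem bspline_intervalIntegrable (n : ℕ) (a b : ℝ) :
    IntervalIntegrable (bspline n) volume a b :=
  bspline_intervalIntegrable_of_measurable (bspline_measurable n) a b

theorem bspline_succ_succ_eq_sub (n : ℕ) (x : ℝ) :
    bspline (n + 2) x =
      (∫ u in (0 : ℝ)..x, bspline (n + 1) u) - ∫ u in (0 : ℝ)..x - 1, bspline (n + 1) u :=
  intervalIntegral_comp_sub_eq_sub_primitive (bspline_intervalIntegrable _) x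

theorem bspline_continuous (n : ℕ) : Continuous (bspline (n + 2)) :=
  continuous_intervalIntegral_comp_sub (bspline_intervalIntegrable (n + 1))

theorem bspline_eq_zero_of_notMem_Icc : ∀ (n : ℕ) {x : ℝ}, x ∉ Icc 0 (n : ℝ) → bspline n x = 0
  | 0, _, _ => rfl
  | 1, x, hx => by rw [bspline_one]; exact indicator_of_notMem (by simpa using hx) _
  | n + 2, x, hx => by
    rw [bspline_succ_succ, integral_congr (g := fun _ => 0), intervalIntegral.integral_zero]
    intro t ht
    rw [uIcc_of_le zero_le_one] at ht
    refine bspline_eq_zero_of_notMem_Icc (n + 1) fun h => hx ⟨?_, ?_⟩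
    · linarith [h.1, ht.1]
    · push_cast at h ⊢
      linarith [h.2, ht.2]

theorem integral_bspline_eq_zero_of_nonpos (n : ℕ) {y : ℝ} (hy : y ≤ 0) :
    ∫ u in (0 : ℝ)..y, bspline n u = 0 := by
  rw [integral_symm, integral_of_le hy, integral_Ioc_eq_integral_Ioo,
    setIntegral_eq_zero_of_forall_eq_zero fun u hu =>
      bspline_eq_zero_of_notMem_Icc n fun h => (h.1.trans_lt hu.2).false, neg_zero]

theorem bspline_eq_pow_div_factorial :
    ∀ (n : ℕ) {x : ℝ}, x ∈ Icc (0 : ℝ) 1 → bspline (n + 1) x = x ^ n / n.factorial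
  | 0, x, hx => by simp [bspline_one, hx]
  | n + 1, x, hx => by
    have hsub : uIcc 0 x ⊆ Icc (0 : ℝ) 1 := by
      rw [uIcc_of_le hx.1]
      exact Icc_subset_Icc_right hx.2
    have hx' : x - 1 ≤ 0 := by linarith [hx.2]
    rw [bspline_succ_succ_eq_sub, integral_bspline_eq_zero_of_nonpos _ hx', sub_zero, integral_congr fun u hu => bspline_eq_pow_div_factorial n (hsub hu),
      intervalIntegral.integral_div, integral_pow, Nat.factorial_succ]
    push_cast
    field_simp
    ring

theorem bspline_one_continuousAt {x : ℝ} (hx : x ≠ 0) (hx' : x ≠ 1) :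
    ContinuousAt (bspline 1) x := by
  rw [bspline_one]
  exact continuousOn_const.continuousAt_indicator (by simp [frontier_Icc, hx, hx'])

theorem bspline_continuousAt_of_forall_ne_intCast (n : ℕ) {x : ℝ} (hx : ∀ z : ℤ, x ≠ z) :
    ContinuousAt (bspline (n + 1)) x := by
  cases n with
  | zero => exact bspline_one_continuousAt (by exact_mod_cast hx 0) (by exact_mod_cast hx 1)
  | succ n => exact (bspline_continuous n).continuousAt

theorem hasDerivAt_bspline_succ_succ (n : ℕ) {x : ℝ} (hx : ∀ z : ℤ, x ≠ z) :
    HasDerivAt (bspline (n + 2)) (bspline (n + 1) x - bspline (n + 1) (x - 1)) x := by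
  have hprimitive {y : ℝ} (hy : ∀ z : ℤ, y ≠ z) :
      HasDerivAt (fun y => ∫ u in (0 : ℝ)..y, bspline (n + 1) u) (bspline (n + 1) y) y :=
    integral_hasDerivAt_right (bspline_intervalIntegrable _ 0 y)
      (bspline_measurable _).stronglyMeasurable.stronglyMeasurableAtFilter
      (bspline_continuousAt_of_forall_ne_intCast n hy)
  have hx' : ∀ z : ℤ, x - 1 ≠ z := fun z h => hx (z + 1) (by push_cast; linarith)
  rw [funext (bspline_succ_succ_eq_sub n)]
  exact (hprimitive hx).sub ((hprimitive hx').comp_sub_const x 1)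

theorem add_natCast_ne_intCast {x : ℝ} (hx : x ∈ Ioo (0 : ℝ) 1) (k : ℕ) (z : ℤ) :
    x + k ≠ z := by
  intro h
  have hlt : ((k : ℤ) : ℝ) < z := by push_cast; linarith [hx.1]
  have hlt' : (z : ℝ) < ((k + 1 : ℤ) : ℝ) := by push_cast; linarith [hx.2]
  have := Int.cast_lt.1 hlt
  have := Int.cast_lt.1 hlt'
  omega

theorem sum_sub_mul_bspline_eq_zero {m : ℕ} {c : ℕ → ℝ}
    (h : ∀ x ∈ Ioo (0 : ℝ) 1, ∑ k ∈ Finset.range (m + 2), c k * bspline (m + 2) (x + k) = 0)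
    {x : ℝ} (hx : x ∈ Ioo (0 : ℝ) 1) :
    ∑ k ∈ Finset.range (m + 1), (c k - c (k + 1)) * bspline (m + 1) (x + k) = 0 := by
  have hderiv : HasDerivAt (fun y => ∑ k ∈ Finset.range (m + 2), c k * bspline (m + 2) (y + k))
      (∑ k ∈ Finset.range (m + 2),
        c k * (bspline (m + 1) (x + k) - bspline (m + 1) (x + k - 1))) x :=
    HasDerivAt.fun_sum fun k _ =>
      ((hasDerivAt_bspline_succ_succ m (add_natCast_ne_intCast hx k)).comp_add_const x k).const_mul
        (c k)
  have hvanish := hderiv.unique <| (hasDerivAt_const x 0).congr_of_eventuallyEq <|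
    Filter.eventually_of_mem (Ioo_mem_nhds hx.1 hx.2) h
  have hlast : bspline (m + 1) (x + (m + 1 : ℕ)) = 0 :=
    bspline_eq_zero_of_notMem_Icc _ fun h => by push_cast at h; linarith [h.2, hx.1]
  have hfirst : bspline (m + 1) (x + (0 : ℕ) - 1) = 0 :=
    bspline_eq_zero_of_notMem_Icc _ fun h => by push_cast at h; linarith [h.1, hx.2]
  rw [← hvanish]
  simp only [mul_sub, Finset.sum_sub_distrib]
  rw [Finset.sum_range_succ (fun k => c k * bspline (m + 1) (x + k)),
    Finset.sum_range_succ' (fun k => c k * bspline (m + 1) (x + k - 1)),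
    hlast, hfirst]
  simp only [sub_mul, Finset.sum_sub_distrib, Nat.cast_succ, ← add_assoc, add_sub_cancel_right,
    mul_zero, add_zero]

theorem sum_bspline_translates_pos (n : ℕ) :
    0 < ∑ k ∈ Finset.range (n + 1), bspline (n + 1) (1 / 2 + k) := by
  have hhalf : 0 < bspline (n + 1) (1 / 2) := by
    rw [bspline_eq_pow_div_factorial n ⟨by norm_num, by norm_num⟩]
    positivity
  calc 0 < bspline (n + 1) (1 / 2 + (0 : ℕ)) := by simpa using hhalf
    _ ≤ ∑ k ∈ Finset.range (n + 1), bspline (n + 1) (1 / 2 + k) :=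
      Finset.single_le_sum (f := fun k : ℕ => bspline (n + 1) (1 / 2 + k))
        (fun k _ => bspline_nonneg _ _) (Finset.mem_range.2 n.succ_pos)

theorem forall_eq_zero_of_sum_mul_bspline_eq_zero_of_forall_eq {n : ℕ} {c : ℕ → ℝ}
    (hc : ∀ k < n + 1, c k = c 0)
    (h : ∑ k ∈ Finset.range (n + 1), c k * bspline (n + 1) (1 / 2 + k) = 0) :
    ∀ k < n + 1, c k = 0 := by
  rw [Finset.sum_congr rfl fun k hk => by rw [hc k (Finset.mem_range.1 hk)], ← Finset.mul_sum] at h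
  have hc0 : c 0 = 0 := (mul_eq_zero.1 h).resolve_right (sum_bspline_translates_pos n).ne'
  exact fun k hk => (hc k hk).trans hc0

theorem forall_eq_of_forall_sub_succ_eq_zero {c : ℕ → ℝ} {n : ℕ}
    (h : ∀ k < n, c k - c (k + 1) = 0) : ∀ k < n + 1, c k = c 0 := by
  intro k hk
  induction k with
  | zero => rfl
  | succ k ih => rw [← sub_eq_zero.1 (h k (by omega)), ih (by omega)]

theorem bspline_translates_linearIndependentOn_Ioo (m : ℕ) (c : ℕ → ℝ)
    (h : ∀ x ∈ Ioo (0 : ℝ) 1, ∑ k ∈ Finset.range (m + 1), c k * bspline (m + 1) (x + k) = 0) :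
    ∀ k < m + 1, c k = 0 := by
  have half_mem : (1 / 2 : ℝ) ∈ Ioo 0 1 := by norm_num
  induction m generalizing c with
  | zero =>
    exact forall_eq_zero_of_sum_mul_bspline_eq_zero_of_forall_eq
      (fun k hk => by rw [Nat.lt_one_iff.1 hk]) (h _ half_mem)
  | succ m ih =>
    have hdiff := ih (fun k => c k - c (k + 1)) fun x hx => sum_sub_mul_bspline_eq_zero h hx
    exact forall_eq_zero_of_sum_mul_bspline_eq_zero_of_forall_eq
      (forall_eq_of_forall_sub_succ_eq_zero hdiff) (h _ half_mem)

theorem bspline_translates_linearIndependent_general (ℓ : ℕ) (c : ℕ → ℝ)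
    (h : ∀ x ∈ Set.Icc (0 : ℝ) 1, ∑ k ∈ Finset.range ℓ, c k * bspline ℓ (x + k) = 0) :
    ∀ k < ℓ, c k = 0 := by
  cases ℓ with
  | zero => exact fun k hk => absurd hk k.not_lt_zero
  | succ m =>
    exact bspline_translates_linearIndependentOn_Ioo m c fun x hx => h x (Ioo_subset_Icc_self hx)

/-- the functions `x ↦ N_ℓ(x + k)`, `k = 0, …, ℓ - 1`, are linearly
independent on `[0, 1]`. -/
theorem bspline_translates_linearIndependent (ℓ : ℕ) (hℓ : 0 < ℓ) (c : ℕ → ℝ)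
    (h : ∀ x ∈ Set.Icc (0 : ℝ) 1, ∑ k ∈ Finset.range ℓ, c k * bspline ℓ (x + k) = 0) :
    ∀ k < ℓ, c k = 0 :=
  bspline_translates_linearIndependent_general ℓ c h
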